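/- arXiv:2603.25364 — 3 statements merged into one kernel-verified Lean document; each statement's English description precedes it below -/
import Mathlib

section
/- Let P_f and P_b be positive definite real n×n matrices. For a real n×n matrix K define J(K) = trace(K P_f Kᵀ + (1 − K) P_b (1 − K)ᵀ). Then the matrix K* = P_b (P_f + P_b)⁻¹ minimizes J, i.e. J(K*) ≤ J(K) for every real n×n matrix K. -/
open Matrix

/-- The two-filter smoother gain `K* = P_b (P_f + P_b)⁻¹` minimizes the trace of the
fused covariance `J(K) = tr(K P_f Kᵀ + (1 - K) P_b (1 - K)ᵀ)`. -/
theorem tfs_gain_minimizes_trace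
    {n : ℕ} (P_f P_b : Matrix (Fin n) (Fin n) ℝ)
    (hPf : P_f.PosDef) (hPb : P_b.PosDef)
    (J : Matrix (Fin n) (Fin n) ℝ → ℝ)
    (hJ : ∀ K, J K = (K * P_f * Kᵀ + (1 - K) * P_b * (1 - K)ᵀ).trace)
    (Kstar : Matrix (Fin n) (Fin n) ℝ) (hK : Kstar = P_b * (P_f + P_b)⁻¹) :
    ∀ K : Matrix (Fin n) (Fin n) ℝ, J Kstar ≤ J K := by
  intro K
  set S := P_f + P_b with hS_def
  have hS : S.PosDef := hPf.add hPb
  have hdet : IsUnit S.det := isUnit_iff_ne_zero.mpr hS.det_pos.ne'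
  have hSsymm : Sᵀ = S := by
    have := hS.1
    rwa [IsHermitian, conjTranspose_eq_transpose_of_trivial] at this
  have hPbsymm : P_bᵀ = P_b := by
    have := hPb.1
    rwa [IsHermitian, conjTranspose_eq_transpose_of_trivial] at this
  have h1 : Kstar * S = P_b := by
    rw [hK, mul_assoc, nonsing_inv_mul S hdet, mul_one]
  have h2 : S * Kstarᵀ = P_b := by
    calc S * Kstarᵀ = (Kstar * Sᵀ)ᵀ := by rw [transpose_mul, transpose_transpose]
    _ = P_b := by rw [hSsymm, h1, hPbsymm]
  have key : ∀ M : Matrix (Fin n) (Fin n) ℝ,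
      M * P_f * Mᵀ + (1 - M) * P_b * (1 - M)ᵀ
        = (M - Kstar) * S * (M - Kstar)ᵀ + (P_b - P_b * Kstarᵀ) := by
    intro M
    have expand : (M - Kstar) * S * (M - Kstar)ᵀ + (P_b - P_b * Kstarᵀ)
        = M * S * Mᵀ - M * (S * Kstarᵀ) - Kstar * S * Mᵀ + (Kstar * S) * Kstarᵀ
          + P_b - P_b * Kstarᵀ := by
      simp only [transpose_sub]
      noncomm_ring
    rw [expand, h2, h1, hS_def]
    simp only [transpose_sub, transpose_one]
    noncomm_ring
  have htr : ∀ M : Matrix (Fin n) (Fin n) ℝ,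
      J M = ((M - Kstar) * S * (M - Kstar)ᵀ).trace + (P_b - P_b * Kstarᵀ).trace := by
    intro M
    rw [hJ, key, trace_add]
  have hKstar : J Kstar = (P_b - P_b * Kstarᵀ).trace := by
    rw [htr, sub_self, zero_mul, Matrix.zero_mul, trace_zero, zero_add]
  have hnonneg : 0 ≤ ((K - Kstar) * S * (K - Kstar)ᵀ).trace := by
    set D := K - Kstar with hD
    rw [Matrix.trace]
    apply Finset.sum_nonneg
    intro i _
    have h := hS.posSemidef.dotProduct_mulVec_nonneg (D i)
    simp only [star_trivial, dotProduct, Matrix.mulVec, Matrix.diag, Matrix.mul_apply,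
      Matrix.transpose_apply, Finset.mul_sum, Finset.sum_mul] at h ⊢
    rw [Finset.sum_comm]
    convert h using 2 with k _
    apply Finset.sum_congr rfl
    intro j _
    ring
  rw [htr K, hKstar]
  linarith
end

section
/- Let P_f and P_b be positive definite real n×n matrices, define J(K) = trace(K P_f Kᵀ + (1 − K) P_b (1 − K)ᵀ), and let K* = P_b (P_f + P_b)⁻¹. If a real n×n matrix K satisfies J(K) = J(K*), then K = K*; that is, K* is the unique minimizer of J. -/
open Matrix

lemma tfs_ring_aux {R : Type*} [Ring R] (K L A B Pf Pb S : R)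
    (hS : S = Pf + Pb) (h1 : A * S = Pb) (h2 : S * B = Pb) :
    K * Pf * L + (1 - K) * Pb * (1 - L)
      = (K - A) * S * (L - B) + (Pb - A * Pb) := by
  have expand : (K - A) * S * (L - B)
      = K * S * L - A * S * L - K * (S * B) + A * (S * B) := by noncomm_ring
  rw [h2, h1] at expand
  rw [expand, hS]
  noncomm_ring

/-- The two-filter smoother gain `K* = P_b (P_f + P_b)⁻¹` is the unique minimizer of
`J(K) = tr(K P_f Kᵀ + (1 - K) P_b (1 - K)ᵀ)`. -/
theorem tfs_gain_unique_minimizer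
    {n : ℕ} (P_f P_b : Matrix (Fin n) (Fin n) ℝ)
    (hPf : P_f.PosDef) (hPb : P_b.PosDef)
    (J : Matrix (Fin n) (Fin n) ℝ → ℝ)
    (hJ : ∀ K, J K = (K * P_f * Kᵀ + (1 - K) * P_b * (1 - K)ᵀ).trace)
    (Kstar : Matrix (Fin n) (Fin n) ℝ) (hK : Kstar = P_b * (P_f + P_b)⁻¹)
    (K : Matrix (Fin n) (Fin n) ℝ) (heq : J K = J Kstar) :
    K = Kstar := by
  set S := P_f + P_b with hSdef
  have hS : S.PosDef := hPf.add hPb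
  have hSunit : IsUnit S := hS.isUnit
  have h1 : Kstar * S = P_b := by
    rw [hK, mul_assoc, nonsing_inv_mul _ (isUnit_iff_isUnit_det _ |>.1 hSunit), mul_one]
  have hSsymm : Sᵀ = S := by simpa using hS.isHermitian.eq
  have h2 : S * Kstarᵀ = P_b := by
    calc S * Kstarᵀ = (Kstar * Sᵀ)ᵀ := by simp [transpose_mul]
    _ = P_b := by rw [hSsymm, h1]; simpa using hPb.isHermitian.eq
  -- key identities
  have keyK : K * P_f * Kᵀ + (1 - K) * P_b * (1 - K)ᵀ
      = (K - Kstar) * S * (Kᵀ - Kstarᵀ) + (P_b - Kstar * P_b) := by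
    have := tfs_ring_aux K Kᵀ Kstar Kstarᵀ P_f P_b S hSdef h1 h2
    simpa [transpose_sub] using this
  have keyKs : Kstar * P_f * Kstarᵀ + (1 - Kstar) * P_b * (1 - Kstar)ᵀ
      = (P_b - Kstar * P_b) := by
    have := tfs_ring_aux Kstar Kstarᵀ Kstar Kstarᵀ P_f P_b S hSdef h1 h2
    simpa [transpose_sub] using this
  set D := K - Kstar with hD
  have hDt : Kᵀ - Kstarᵀ = Dᵀ := (transpose_sub K Kstar).symm
  have htr : (D * S * Dᵀ).trace = 0 := by
    have hJK := hJ K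
    have hJKs := hJ Kstar
    rw [keyK, hDt] at hJK
    rw [keyKs] at hJKs
    have : (D * S * Dᵀ + (P_b - Kstar * P_b)).trace = (P_b - Kstar * P_b).trace := by
      rw [← hJK, ← hJKs, heq]
    rw [trace_add] at this
    linarith
  -- positive semidefiniteness: trace is sum of quadratic forms over rows
  have hform : (D * S * Dᵀ).trace = ∑ i, (D i) ⬝ᵥ (S *ᵥ (D i)) := by
    simp only [trace, diag, mul_apply, mulVec, dotProduct, transpose_apply,
      Finset.sum_mul, Finset.mul_sum]
    congr 1
    ext i
    rw [Finset.sum_comm]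
    congr 1
    ext j
    congr 1
    ext k
    ring
  have hrow : ∀ i, D i = 0 := by
    intro i
    by_contra hne
    have hpos : 0 < (D i) ⬝ᵥ (S *ᵥ (D i)) := by
      have := hS.dotProduct_mulVec_pos hne
      simpa using this
    have hnonneg : ∀ j ∈ Finset.univ, (0:ℝ) ≤ (D j) ⬝ᵥ (S *ᵥ (D j)) := by
      intro j _
      have := hS.posSemidef.dotProduct_mulVec_nonneg (D j)
      simpa using this
    have hsum : (0:ℝ) < ∑ j, (D j) ⬝ᵥ (S *ᵥ (D j)) :=
      Finset.sum_pos' hnonneg ⟨i, Finset.mem_univ i, hpos⟩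
    rw [hform] at htr
    linarith
  have hD0 : D = 0 := by
    ext i j
    have := congrFun (hrow i) j
    simpa using this
  have := sub_eq_zero.mp hD0
  exact this
end

section
/- Let P_f and P_b be positive definite real n×n matrices, and set K_f = P_b (P_f + P_b)⁻¹ and K_b = 1 − K_f. Then the fused covariance with the optimal gains satisfies K_f P_f K_fᵀ + K_b P_b K_bᵀ = (P_f⁻¹ + P_b⁻¹)⁻¹; i.e., the smoothed covariance is the inverse of the sum of the forward and backward information matrices. -/
/-!
Writing `S = P_f + P_b`, one has `P_f⁻¹ + P_b⁻¹ = P_f⁻¹ S P_b⁻¹`, so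
`(P_f⁻¹ + P_b⁻¹)⁻¹ = P_b S⁻¹ P_f`, and by symmetry in the two summands this also equals
`P_f S⁻¹ P_b`. The complementary gain is `1 - P_b S⁻¹ = P_f S⁻¹`, so the fused covariance is
`P_b S⁻¹ P_f S⁻¹ P_b + P_f S⁻¹ P_b S⁻¹ P_f = P_f S⁻¹ P_b S⁻¹ (P_b + P_f) = P_f S⁻¹ P_b`.
-/

open Matrix

namespace Matrix

variable {m R : Type*} [Fintype m] [DecidableEq m] [CommRing R] {A B : Matrix m m R}

theorem inv_add_inv_eq_inv_mul_add_mul_inv (hA : IsUnit A.det) (hB : IsUnit B.det) :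
    A⁻¹ + B⁻¹ = A⁻¹ * (A + B) * B⁻¹ := by
  rw [mul_add, add_mul, nonsing_inv_mul _ hA, one_mul, mul_nonsing_inv_cancel_right _ _ hB,
    add_comm]

theorem inv_inv_add_inv (hA : IsUnit A.det) (hB : IsUnit B.det) :
    (A⁻¹ + B⁻¹)⁻¹ = B * (A + B)⁻¹ * A := by
  rw [inv_add_inv_eq_inv_mul_add_mul_inv hA hB, mul_inv_rev, mul_inv_rev,
    nonsing_inv_nonsing_inv _ hA, nonsing_inv_nonsing_inv _ hB, Matrix.mul_assoc]

theorem mul_inv_add_mul_comm (hA : IsUnit A.det) (hB : IsUnit B.det) :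
    B * (A + B)⁻¹ * A = A * (A + B)⁻¹ * B := by
  rw [← inv_inv_add_inv hA hB, add_comm A⁻¹, inv_inv_add_inv hB hA, add_comm B]

theorem one_sub_mul_inv_add (hAB : IsUnit (A + B).det) :
    1 - B * (A + B)⁻¹ = A * (A + B)⁻¹ := by
  rw [← mul_nonsing_inv _ hAB, ← sub_mul, add_sub_cancel_right]

/-- The gain with which the estimate of covariance `A` is weighted when fused with an
independent estimate of covariance `B`. -/
noncomputable def fusionGain (A B : Matrix m m R) : Matrix m m R := B * (A + B)⁻¹

theorem fusionGain_fused_covariance (hAs : A.IsSymm) (hBs : B.IsSymm) (hA : IsUnit A.det)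
    (hB : IsUnit B.det) (hAB : IsUnit (A + B).det) :
    fusionGain A B * A * (fusionGain A B)ᵀ + (1 - fusionGain A B) * B * (1 - fusionGain A B)ᵀ =
      (A⁻¹ + B⁻¹)⁻¹ := by
  have hSinv : (A + B)⁻¹ᵀ = (A + B)⁻¹ := (hAs.add hBs).inv.eq
  rw [fusionGain, one_sub_mul_inv_add hAB]
  simp only [transpose_mul, hSinv, hAs.eq, hBs.eq]
  calc B * (A + B)⁻¹ * A * ((A + B)⁻¹ * B) + A * (A + B)⁻¹ * B * ((A + B)⁻¹ * A)
      = A * (A + B)⁻¹ * B * (A + B)⁻¹ * (A + B) := by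
        rw [mul_inv_add_mul_comm hA hB]; noncomm_ring
    _ = A * (A + B)⁻¹ * B := nonsing_inv_mul_cancel_right _ _ hAB
    _ = (A⁻¹ + B⁻¹)⁻¹ := by rw [inv_inv_add_inv hA hB, mul_inv_add_mul_comm hA hB]

end Matrix

/-- With the optimal fusion gains, the fused covariance equals the inverse of the sum of
the forward and backward information matrices. -/
theorem tfs_optimal_fused_covariance
    {n : ℕ} (P_f P_b : Matrix (Fin n) (Fin n) ℝ)
    (hPf : P_f.PosDef) (hPb : P_b.PosDef)
    (K_f K_b : Matrix (Fin n) (Fin n) ℝ)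
    (hKf : K_f = P_b * (P_f + P_b)⁻¹) (hKb : K_b = 1 - K_f) :
    K_f * P_f * K_fᵀ + K_b * P_b * K_bᵀ = (P_f⁻¹ + P_b⁻¹)⁻¹ := by
  subst hKb hKf
  exact fusionGain_fused_covariance (isHermitian_iff_isSymm.mp hPf.isHermitian)
    (isHermitian_iff_isSymm.mp hPb.isHermitian) ((isUnit_iff_isUnit_det _).mp hPf.isUnit)
    ((isUnit_iff_isUnit_det _).mp hPb.isUnit) ((isUnit_iff_isUnit_det _).mp (hPf.add hPb).isUnit)
end
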